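/- Let N ≥ 2, fix an index i, and for each agent k = 1,…,N let δ_k ≥ 0 be its synchronization error and t_rs^k the start time (on agent k's clock) of its reachable set, all valid for duration T > 0. Let t be a global time and for each k let s_k be agent k's local reading at global time t, with |s_k − t| ≤ δ_k. If s_i ≤ T + min_{j ≠ i} (t_rs^j − δ_i − δ_j), then s_i ≤ t_rs^i + T and for every j ≠ i one has s_j ≤ t_rs^j + T, provided also t_rs^i ≥ min_{j ≠ i}(t_rs^j − δ_i − δ_j). (That is, up to the stated local deadline, every agent's reachable set in the globally useful reachable set is still valid on that agent's own clock.) -/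

import Mathlib

/-! Two clocks synchronized to a common global time `t` with errors `δ i`, `δ j` read values at
most `δ i + δ j` apart. So if agent `i`'s reading is below the deadline
`T + (t_rs^j - δ i - δ j)`, agent `j`'s reading is below `t_rs^j + T`. -/

theorem le_add_add_of_abs_sub_le {a b t da db : ℝ} (ha : |a - t| ≤ da) (hb : |b - t| ≤ db) :
    b ≤ a + da + db := by
  linarith [(abs_le.mp ha).1, (abs_le.mp hb).2]

theorem ciInf_le_of_finite {ι : Type*} [Finite ι] (f : ι → ℝ) (j : ι) : ⨅ k, f k ≤ f j :=
  ciInf_le (Set.finite_range f).bddBelow j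

theorem globally_useful_reachable_set_valid_general
    (N : ℕ) (i : Fin N)
    (δ trs : Fin N → ℝ)
    (T : ℝ)
    (t : ℝ) (s : Fin N → ℝ)
    (hs : ∀ k, |s k - t| ≤ δ k)
    (h : s i ≤ T + ⨅ j : {j : Fin N // j ≠ i}, (trs j - δ i - δ j))
    (hcond : trs i ≥ ⨅ j : {j : Fin N // j ≠ i}, (trs j - δ i - δ j)) :
    s i ≤ trs i + T ∧ ∀ j : Fin N, j ≠ i → s j ≤ trs j + T := by
  refine ⟨by linarith, fun j hj => ?_⟩
  have hdeadline := ciInf_le_of_finite (fun k : {k : Fin N // k ≠ i} => trs k - δ i - δ k) ⟨j, hj⟩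
  linarith [le_add_add_of_abs_sub_le (hs i) (hs j)]

/-- Validity of the globally useful reachable set: up to the local deadline
`T + min_{j ≠ i} (t_rs^j - δ_i - δ_j)` on agent i's clock, every agent's reachable set
is still valid on that agent's own clock (assuming also
`t_rs^i ≥ min_{j ≠ i}(t_rs^j - δ_i - δ_j)`). -/
theorem globally_useful_reachable_set_valid
    (N : ℕ) (hN : 2 ≤ N) (i : Fin N)
    (δ trs : Fin N → ℝ) (hδ : ∀ k, 0 ≤ δ k)
    (T : ℝ) (hT : 0 < T)
    (t : ℝ) (s : Fin N → ℝ)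
    (hs : ∀ k, |s k - t| ≤ δ k)
    (h : s i ≤ T + ⨅ j : {j : Fin N // j ≠ i}, (trs j - δ i - δ j))
    (hcond : trs i ≥ ⨅ j : {j : Fin N // j ≠ i}, (trs j - δ i - δ j)) :
    s i ≤ trs i + T ∧ ∀ j : Fin N, j ≠ i → s j ≤ trs j + T :=
  globally_useful_reachable_set_valid_general N i δ trs T t s hs h hcond
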